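/- Let I = {a_1,a_2,a_3} be distinct complex numbers. Then for a prime p and j ≥ 1, G_I(1−a_1, p^j) = p^{-a_2 j} (1 − p^{-1+a_1−a_3})/(1 − p^{a_2−a_3}) + p^{-a_3 j} (1 − p^{-1+a_1−a_2})/(1 − p^{a_3−a_2}). In particular, G_I(1−a_1, p) = p^{-a_2} + p^{-a_3} − p^{-1+a_1−a_2−a_3}. -/

import Mathlib

open Finset ArithmeticFunction

/-- The arithmetic function `n ↦ n^{-x}` (and `0 ↦ 0`). -/
noncomputable def powFn (x : ℂ) : ArithmeticFunction ℂ :=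
  ⟨fun n => if n = 0 then 0 else (n : ℂ) ^ (-x), by simp⟩

/-- `σ_X(n)`, the `k`-fold Dirichlet convolution of `n ↦ n^{-x_i}`. -/
noncomputable def sigmaX (k : ℕ) (x : Fin k → ℂ) : ArithmeticFunction ℂ :=
  ∏ i : Fin k, powFn (x i)

/-- `g_X(s,n)`, multiplicative, with
`g_X(s,p^α) = (∑_{j≥0} σ_X(p^{j+α})p^{-js}) / (∑_{j≥0} σ_X(p^j)p^{-js})`. -/
noncomputable def gX (k : ℕ) (x : Fin k → ℂ) (s : ℂ) (n : ℕ) : ℂ :=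
  ∏ p ∈ n.primeFactors,
    (∑' j : ℕ, sigmaX k x (p ^ (j + n.factorization p)) * (p : ℂ) ^ (-(j : ℂ) * s)) /
      (∑' j : ℕ, sigmaX k x (p ^ j) * (p : ℂ) ^ (-(j : ℂ) * s))

/-- `G_X(s,n) = ∑_{d|n} (μ(d) d^s / φ(d)) ∑_{e|d} (μ(e)/e^s) g_X(s, ne/d)`. -/
noncomputable def GX (k : ℕ) (x : Fin k → ℂ) (s : ℂ) (n : ℕ) : ℂ :=
  ∑ d ∈ n.divisors,
    ((moebius d : ℂ) * (d : ℂ) ^ s / (Nat.totient d : ℂ)) *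
      ∑ e ∈ d.divisors, ((moebius e : ℂ) / (e : ℂ) ^ s) * gX k x s (n * e / d)

lemma powFn_prime_pow {p : ℕ} (hp : p.Prime) (a : ℂ) (i : ℕ) :
    powFn a (p ^ i) = ((p : ℂ) ^ (-a)) ^ i := by
  have h0 : p ^ i ≠ 0 := pow_ne_zero _ hp.pos.ne'
  simp only [powFn, ArithmeticFunction.coe_mk, if_neg h0]
  push_cast
  rw [← Complex.natCast_cpow_natCast_mul, Complex.cpow_nat_mul]

lemma mul_apply_prime_pow {p : ℕ} (hp : p.Prime) (f g : ArithmeticFunction ℂ) (m : ℕ) :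
    (f * g) (p ^ m) = ∑ i ∈ range (m + 1), f (p ^ i) * g (p ^ (m - i)) := by
  rw [ArithmeticFunction.mul_apply, Nat.sum_divisorsAntidiagonal (f · * g ·),
    Nat.sum_divisors_prime_pow hp]
  refine Finset.sum_congr rfl fun i hi => ?_
  rw [Nat.pow_div (Nat.lt_succ_iff.mp (mem_range.mp hi)) hp.pos]

lemma hgeom (x y : ℂ) (m : ℕ) :
    (∑ i ∈ range (m + 1), x ^ i * y ^ (m - i)) * (x - y) = x ^ (m + 1) - y ^ (m + 1) := by
  have := geom_sum₂_mul x y (m + 1)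
  simpa using this

lemma sigmaX_three (a₁ a₂ a₃ : ℂ) :
    sigmaX 3 ![a₁, a₂, a₃] = powFn a₁ * powFn a₂ * powFn a₃ := by
  rw [sigmaX, Fin.prod_univ_three]
  rfl

lemma sigma_closed {p : ℕ} (hp : p.Prime) (a₁ a₂ a₃ : ℂ) (n : ℕ) :
    sigmaX 3 ![a₁, a₂, a₃] (p ^ n) *
      (((p:ℂ)^(-a₁) - (p:ℂ)^(-a₂)) * (((p:ℂ)^(-a₁) - (p:ℂ)^(-a₃)) * ((p:ℂ)^(-a₂) - (p:ℂ)^(-a₃)))) =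
    ((p:ℂ)^(-a₂) - (p:ℂ)^(-a₃)) * ((p:ℂ)^(-a₁)) ^ (n + 2)
      - ((p:ℂ)^(-a₁) - (p:ℂ)^(-a₃)) * ((p:ℂ)^(-a₂)) ^ (n + 2)
      + ((p:ℂ)^(-a₁) - (p:ℂ)^(-a₂)) * ((p:ℂ)^(-a₃)) ^ (n + 2) := by
  set x₁ := (p:ℂ)^(-a₁); set x₂ := (p:ℂ)^(-a₂); set x₃ := (p:ℂ)^(-a₃)
  have e0 : sigmaX 3 ![a₁, a₂, a₃] (p ^ n)
      = ∑ i ∈ range (n + 1), (powFn a₁ * powFn a₂) (p ^ i) * x₃ ^ (n - i) := by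
    rw [sigmaX_three, mul_apply_prime_pow hp]
    exact Finset.sum_congr rfl fun i _ => by rw [powFn_prime_pow hp]
  have e3 : ∀ i, (powFn a₁ * powFn a₂) (p ^ i) * (x₁ - x₂) = x₁ ^ (i + 1) - x₂ ^ (i + 1) := by
    intro i
    rw [mul_apply_prime_pow hp]
    rw [show (∑ k ∈ range (i+1), powFn a₁ (p^k) * powFn a₂ (p^(i-k)))
        = ∑ k ∈ range (i+1), x₁ ^ k * x₂ ^ (i-k) from
      Finset.sum_congr rfl fun k _ => by rw [powFn_prime_pow hp, powFn_prime_pow hp]]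
    exact hgeom x₁ x₂ i
  have key : (∑ i ∈ range (n + 1), (powFn a₁ * powFn a₂) (p ^ i) * x₃ ^ (n - i)) * (x₁ - x₂)
      = x₁ * (∑ i ∈ range (n + 1), x₁ ^ i * x₃ ^ (n - i))
        - x₂ * (∑ i ∈ range (n + 1), x₂ ^ i * x₃ ^ (n - i)) := by
    rw [Finset.sum_mul, Finset.mul_sum, Finset.mul_sum, ← Finset.sum_sub_distrib]
    refine Finset.sum_congr rfl fun i _ => ?_
    have := e3 i
    linear_combination x₃ ^ (n - i) * this
  have e1 := hgeom x₁ x₃ n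
  have e2 := hgeom x₂ x₃ n
  rw [e0]
  linear_combination (x₁ - x₃) * (x₂ - x₃) * key + x₁ * (x₂ - x₃) * e1 - x₂ * (x₁ - x₃) * e2

set_option maxHeartbeats 800000 in
lemma N_closed {p : ℕ} (hp : p.Prime) (a₁ a₂ a₃ s : ℂ) (α : ℕ)
    (hu₁ : ‖(p:ℂ)^(-a₁) * (p:ℂ)^(-s)‖ < 1)
    (hu₂ : ‖(p:ℂ)^(-a₂) * (p:ℂ)^(-s)‖ < 1)
    (hu₃ : ‖(p:ℂ)^(-a₃) * (p:ℂ)^(-s)‖ < 1)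
    (hD : ((p:ℂ)^(-a₁) - (p:ℂ)^(-a₂)) * (((p:ℂ)^(-a₁) - (p:ℂ)^(-a₃)) * ((p:ℂ)^(-a₂) - (p:ℂ)^(-a₃))) ≠ 0) :
    ∑' m : ℕ, sigmaX 3 ![a₁, a₂, a₃] (p ^ (m + α)) * (p:ℂ) ^ (-(m:ℂ) * s) =
      (((p:ℂ)^(-a₂) - (p:ℂ)^(-a₃)) * ((p:ℂ)^(-a₁)) ^ (α+2) *
          ((1 - (p:ℂ)^(-a₂) * (p:ℂ)^(-s)) * (1 - (p:ℂ)^(-a₃) * (p:ℂ)^(-s)))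
        - ((p:ℂ)^(-a₁) - (p:ℂ)^(-a₃)) * ((p:ℂ)^(-a₂)) ^ (α+2) *
          ((1 - (p:ℂ)^(-a₁) * (p:ℂ)^(-s)) * (1 - (p:ℂ)^(-a₃) * (p:ℂ)^(-s)))
        + ((p:ℂ)^(-a₁) - (p:ℂ)^(-a₂)) * ((p:ℂ)^(-a₃)) ^ (α+2) *
          ((1 - (p:ℂ)^(-a₁) * (p:ℂ)^(-s)) * (1 - (p:ℂ)^(-a₂) * (p:ℂ)^(-s)))) /
      ((((p:ℂ)^(-a₁) - (p:ℂ)^(-a₂)) * (((p:ℂ)^(-a₁) - (p:ℂ)^(-a₃)) * ((p:ℂ)^(-a₂) - (p:ℂ)^(-a₃)))) *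
        ((1 - (p:ℂ)^(-a₁) * (p:ℂ)^(-s)) * ((1 - (p:ℂ)^(-a₂) * (p:ℂ)^(-s)) * (1 - (p:ℂ)^(-a₃) * (p:ℂ)^(-s))))) := by
  have h1u : ∀ z : ℂ, ‖z‖ < 1 → 1 - z ≠ 0 := by
    intro z hz h
    rw [sub_eq_zero] at h
    rw [← h] at hz
    simp at hz
  set x₁ := (p:ℂ)^(-a₁); set x₂ := (p:ℂ)^(-a₂); set x₃ := (p:ℂ)^(-a₃)
  set t := (p:ℂ)^(-s) with ht
  set D := (x₁ - x₂) * ((x₁ - x₃) * (x₂ - x₃)) with hDdef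
  set A₁ := (x₂ - x₃) * x₁ ^ (α+2) * D⁻¹ with hA₁
  set A₂ := -((x₁ - x₃) * x₂ ^ (α+2) * D⁻¹) with hA₂
  set A₃ := (x₁ - x₂) * x₃ ^ (α+2) * D⁻¹ with hA₃
  have hfun : ∀ m : ℕ, sigmaX 3 ![a₁, a₂, a₃] (p ^ (m + α)) * (p:ℂ) ^ (-(m:ℂ) * s)
      = A₁ * (x₁*t)^m + A₂ * (x₂*t)^m + A₃ * (x₃*t)^m := by
    intro m
    have hσ := sigma_closed hp a₁ a₂ a₃ (m + α)
    have hσ' : sigmaX 3 ![a₁, a₂, a₃] (p ^ (m + α))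
        = ((x₂ - x₃) * x₁ ^ (m+α+2) - (x₁ - x₃) * x₂ ^ (m+α+2) + (x₁ - x₂) * x₃ ^ (m+α+2)) * D⁻¹ := by
      field_simp
      linear_combination hσ
    rw [show -(m:ℂ) * s = (m:ℕ) * (-s) by ring, Complex.cpow_nat_mul, ← ht, hσ', hA₁, hA₂, hA₃]
    ring
  rw [tsum_congr hfun]
  have s₁ := (summable_geometric_of_norm_lt_one hu₁).mul_left A₁
  have s₂ := (summable_geometric_of_norm_lt_one hu₂).mul_left A₂
  have s₃ := (summable_geometric_of_norm_lt_one hu₃).mul_left A₃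
  rw [Summable.tsum_add (s₁.add s₂) s₃, Summable.tsum_add s₁ s₂, tsum_mul_left, tsum_mul_left, tsum_mul_left,
    tsum_geometric_of_norm_lt_one hu₁, tsum_geometric_of_norm_lt_one hu₂,
    tsum_geometric_of_norm_lt_one hu₃, hA₁, hA₂, hA₃]
  have k₁ := h1u _ hu₁
  have k₂ := h1u _ hu₂
  have k₃ := h1u _ hu₃
  rw [hDdef] at *
  field_simp
  ring

lemma gX_one (k : ℕ) (x : Fin k → ℂ) (s : ℂ) : gX k x s 1 = 1 := by
  rw [gX]; simp

lemma gX_prime_pow {p : ℕ} (hp : p.Prime) (k : ℕ) (x : Fin k → ℂ) (s : ℂ) {α : ℕ} (hα : α ≠ 0) :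
    gX k x s (p ^ α) =
      (∑' j : ℕ, sigmaX k x (p ^ (j + α)) * (p : ℂ) ^ (-(j : ℂ) * s)) /
        (∑' j : ℕ, sigmaX k x (p ^ j) * (p : ℂ) ^ (-(j : ℂ) * s)) := by
  rw [gX, Nat.primeFactors_prime_pow hα hp, Finset.prod_singleton,
    Nat.Prime.factorization_pow hp, Finsupp.single_eq_same]

lemma GX_prime_pow {p : ℕ} (hp : p.Prime) (k : ℕ) (x : Fin k → ℂ) (s : ℂ) {j : ℕ} (hj : 1 ≤ j) :
    GX k x s (p ^ j) = gX k x s (p ^ j)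
      + (-1) * (p:ℂ)^s / ((p:ℂ) - 1) *
          (gX k x s (p ^ (j-1)) + (-1)/(p:ℂ)^s * gX k x s (p ^ j)) := by
  rw [GX, Nat.sum_divisors_prime_pow hp]
  rw [← Finset.sum_subset (Finset.range_subset_range.mpr (by omega : 2 ≤ j + 1))
    (fun i _ hi => ?_)]
  · rw [Finset.sum_range_succ, Finset.sum_range_one]
    have h0 : p ^ (0:ℕ) = 1 := pow_zero p
    have h1 : p ^ (1:ℕ) = p := pow_one p
    rw [h0, h1]
    have hd1 : Nat.divisors 1 = {1} := Nat.divisors_one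
    have hdp : Nat.divisors p = {1, p} := hp.divisors
    rw [hd1, hdp, Finset.sum_singleton, Finset.sum_insert (by simp [hp.ne_one, Ne.symm]),
      Finset.sum_singleton]
    rw [moebius_apply_one, moebius_apply_prime hp, Nat.totient_one, Nat.totient_prime hp]
    have hpj1 : p ^ j * 1 / 1 = p ^ j := by simp
    have hpj2 : p ^ j * 1 / p = p ^ (j - 1) := by
      have hjj : p ^ j = p ^ (j - 1) * p := by rw [← pow_succ]; congr 1; omega
      rw [Nat.mul_one, hjj, Nat.mul_div_assoc _ (dvd_refl p), Nat.div_self hp.pos, Nat.mul_one]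
    have hpj3 : p ^ j * p / p = p ^ j := by
      rw [Nat.mul_div_assoc _ (dvd_refl p), Nat.div_self hp.pos, Nat.mul_one]
    rw [hpj1, hpj2, hpj3]
    have hcast : ((p - 1 : ℕ) : ℂ) = (p : ℂ) - 1 := by
      push_cast [Nat.cast_sub hp.one_le]; ring
    rw [hcast]
    push_cast
    rw [Complex.one_cpow]
    ring
  · have h2 : i ≠ 0 ∧ i ≠ 1 := by simp at hi; omega
    rw [moebius_apply_prime_pow hp h2.1, if_neg h2.2]
    simp

lemma one_sub_div' (x y : ℂ) (hx : x ≠ 0) : 1 - y * x⁻¹ = (x - y) * x⁻¹ := by field_simp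

lemma step1 (A B D P Q : ℂ) (hD : D ≠ 0) (hP1 : P - 1 ≠ 0) (hQ : Q ≠ 0) :
    A/D + (-1)*Q/(P-1) * (B/D + (-1)/Q * (A/D)) = (A*P - Q*B)/(D*(P-1)) := by
  have h1 := mul_inv_cancel₀ hD
  have h2 := mul_inv_cancel₀ hP1
  have h3 := mul_inv_cancel₀ hQ
  rw [div_mul_eq_div_div]
  linear_combination (A * D⁻¹ * (P-1)⁻¹) * h3 - (A * D⁻¹) * h2

lemma div_quot (a c d : ℂ) (hc : c ≠ 0) (hd : d ≠ 0) : (a/(d*c))/(d/(d*c)) = a/d := by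
  rw [div_div_div_cancel_right₀ (mul_ne_zero hd hc)]

set_option maxHeartbeats 1600000 in
lemma final_algebra (P x₁ x₂ x₃ X₁ X₂ X₃ : ℂ)
    (hP : P ≠ 0) (hP1 : P - 1 ≠ 0) (hx₁ : x₁ ≠ 0) (hx₂ : x₂ ≠ 0) (hx₃ : x₃ ≠ 0)
    (h12 : x₁ - x₂ ≠ 0) (h13 : x₁ - x₃ ≠ 0) (h23 : x₂ - x₃ ≠ 0) :
    ((x₂-x₃) * (X₁*x₁^2) * ((1 - x₂*(x₁*P)⁻¹) * (1 - x₃*(x₁*P)⁻¹))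
        - (x₁-x₃) * (X₂*x₂^2) * ((1 - x₁*(x₁*P)⁻¹) * (1 - x₃*(x₁*P)⁻¹))
        + (x₁-x₂) * (X₃*x₃^2) * ((1 - x₁*(x₁*P)⁻¹) * (1 - x₂*(x₁*P)⁻¹)))
      / ((x₁-x₂)*((x₁-x₃)*(x₂-x₃)))
    + (-1) * (P * x₁) / (P - 1) *
      (((x₂-x₃) * (X₁*x₁) * ((1 - x₂*(x₁*P)⁻¹) * (1 - x₃*(x₁*P)⁻¹))
          - (x₁-x₃) * (X₂*x₂) * ((1 - x₁*(x₁*P)⁻¹) * (1 - x₃*(x₁*P)⁻¹))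
          + (x₁-x₂) * (X₃*x₃) * ((1 - x₁*(x₁*P)⁻¹) * (1 - x₂*(x₁*P)⁻¹)))
        / ((x₁-x₂)*((x₁-x₃)*(x₂-x₃)))
       + (-1) / (P * x₁) *
        (((x₂-x₃) * (X₁*x₁^2) * ((1 - x₂*(x₁*P)⁻¹) * (1 - x₃*(x₁*P)⁻¹))
            - (x₁-x₃) * (X₂*x₂^2) * ((1 - x₁*(x₁*P)⁻¹) * (1 - x₃*(x₁*P)⁻¹))
            + (x₁-x₂) * (X₃*x₃^2) * ((1 - x₁*(x₁*P)⁻¹) * (1 - x₂*(x₁*P)⁻¹)))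
          / ((x₁-x₂)*((x₁-x₃)*(x₂-x₃)))))
    = X₂ * ((1 - x₃*(x₁*P)⁻¹) / (1 - x₃*x₂⁻¹)) + X₃ * ((1 - x₂*(x₁*P)⁻¹) / (1 - x₂*x₃⁻¹)) := by
  have hxP : x₁ * P ≠ 0 := mul_ne_zero hx₁ hP
  have hD : (x₁-x₂)*((x₁-x₃)*(x₂-x₃)) ≠ 0 := mul_ne_zero h12 (mul_ne_zero h13 h23)
  have h32 : x₃ - x₂ ≠ 0 := fun h => h23 (by linear_combination -h)
  rw [step1 _ _ _ _ _ hD hP1 (mul_ne_zero hP hx₁)]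
  have hV : (1 : ℂ) - x₃*x₂⁻¹ ≠ 0 := by
    rw [one_sub_div' x₂ x₃ hx₂]; exact mul_ne_zero h23 (inv_ne_zero hx₂)
  have hW : (1 : ℂ) - x₂*x₃⁻¹ ≠ 0 := by
    rw [one_sub_div' x₃ x₂ hx₃]; exact mul_ne_zero h32 (inv_ne_zero hx₃)
  rw [show X₂ * ((1 - x₃*(x₁*P)⁻¹) / (1 - x₃*x₂⁻¹))
      = (X₂ * (1 - x₃*(x₁*P)⁻¹)) / (1 - x₃*x₂⁻¹) from (mul_div_assoc _ _ _).symm,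
    show X₃ * ((1 - x₂*(x₁*P)⁻¹) / (1 - x₂*x₃⁻¹))
      = (X₃ * (1 - x₂*(x₁*P)⁻¹)) / (1 - x₂*x₃⁻¹) from (mul_div_assoc _ _ _).symm,
    div_add_div _ _ hV hW, div_eq_div_iff (mul_ne_zero hD hP1) (mul_ne_zero hV hW)]
  field_simp
  ring

set_option maxHeartbeats 800000 in
lemma part2_algebra (P x₁ x₂ x₃ : ℂ)
    (hP : P ≠ 0) (hx₁ : x₁ ≠ 0) (hx₂ : x₂ ≠ 0) (hx₃ : x₃ ≠ 0) (h23 : x₂ - x₃ ≠ 0) :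
    x₂ * ((1 - x₃*(x₁*P)⁻¹) / (1 - x₃*x₂⁻¹)) + x₃ * ((1 - x₂*(x₁*P)⁻¹) / (1 - x₂*x₃⁻¹))
      = x₂ + x₃ - x₂ * (x₃ * (x₁*P)⁻¹) := by
  have hxP : x₁ * P ≠ 0 := mul_ne_zero hx₁ hP
  have h32 : x₃ - x₂ ≠ 0 := fun h => h23 (by linear_combination -h)
  rw [one_sub_div' _ x₂ hxP, one_sub_div' _ x₃ hxP, one_sub_div' x₂ x₃ hx₂, one_sub_div' x₃ x₂ hx₃]
  field_simp
  ring

set_option maxHeartbeats 1600000 in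
/-- for `I = {a₁,a₂,a₃}` pairwise distinct with `|a_i|` small, a prime
`p` and `j ≥ 1`,
`G_I(1−a₁, p^j) = p^{-a₂ j}(1 − p^{-1+a₁−a₃})/(1 − p^{a₂−a₃})
              + p^{-a₃ j}(1 − p^{-1+a₁−a₂})/(1 − p^{a₃−a₂})`, and in particular
`G_I(1−a₁, p) = p^{-a₂} + p^{-a₃} − p^{-1+a₁−a₂−a₃}`. -/
theorem stmt_5 (a₁ a₂ a₃ : ℂ) (h12 : a₁ ≠ a₂) (h13 : a₁ ≠ a₃) (h23 : a₂ ≠ a₃)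
    (hsmall : ‖a₁‖ < 1/10 ∧ ‖a₂‖ < 1/10 ∧ ‖a₃‖ < 1/10)
    (p : ℕ) (hp : p.Prime)
    (hnv : ∀ b c : ℂ, (b = a₁ ∨ b = a₂ ∨ b = a₃) → (c = a₁ ∨ c = a₂ ∨ c = a₃) → b ≠ c →
      (1 : ℂ) - (p : ℂ) ^ (b - c) ≠ 0)
    (j : ℕ) (hj : 1 ≤ j) :
    GX 3 ![a₁, a₂, a₃] (1 - a₁) (p ^ j) =
        (p : ℂ) ^ (-a₂ * (j : ℂ)) *
            ((1 - (p : ℂ) ^ (-1 + a₁ - a₃)) / (1 - (p : ℂ) ^ (a₂ - a₃))) +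
          (p : ℂ) ^ (-a₃ * (j : ℂ)) *
            ((1 - (p : ℂ) ^ (-1 + a₁ - a₂)) / (1 - (p : ℂ) ^ (a₃ - a₂))) ∧
      GX 3 ![a₁, a₂, a₃] (1 - a₁) p =
        (p : ℂ) ^ (-a₂) + (p : ℂ) ^ (-a₃) - (p : ℂ) ^ (-1 + a₁ - a₂ - a₃) := by
  obtain ⟨hs1, hs2, hs3⟩ := hsmall
  have hP0 : (p:ℂ) ≠ 0 := Nat.cast_ne_zero.mpr hp.pos.ne'
  have hP1 : (p:ℂ) - 1 ≠ 0 := sub_ne_zero.mpr (by exact_mod_cast hp.one_lt.ne')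
  have hcp : ∀ c : ℂ, (p:ℂ)^c ≠ 0 := fun c h => hP0 ((Complex.cpow_eq_zero_iff _ _).mp h).1
  -- real part bounds
  have hA1 : |a₁.re| < 1/10 := lt_of_le_of_lt (Complex.abs_re_le_norm a₁) hs1
  have hA2 : |a₂.re| < 1/10 := lt_of_le_of_lt (Complex.abs_re_le_norm a₂) hs2
  have hA3 : |a₃.re| < 1/10 := lt_of_le_of_lt (Complex.abs_re_le_norm a₃) hs3
  obtain ⟨l1, r1⟩ := abs_lt.mp hA1
  obtain ⟨l2, r2⟩ := abs_lt.mp hA2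
  obtain ⟨l3, r3⟩ := abs_lt.mp hA3
  -- norm bound
  have hnorm : ∀ c : ℂ, c.re < 0 → ‖(p:ℂ)^c‖ < 1 := by
    intro c hc
    rw [show ((p:ℕ):ℂ) = ((p:ℝ):ℂ) by push_cast; rfl,
      Complex.norm_cpow_eq_rpow_re_of_pos (by exact_mod_cast hp.pos)]
    exact Real.rpow_lt_one_of_one_lt_of_neg (by exact_mod_cast hp.one_lt) hc
  have hu : ∀ b : ℂ, (-b + -(1-a₁)).re < 0 → ‖(p:ℂ)^(-b) * (p:ℂ)^(-(1-a₁))‖ < 1 := by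
    intro b hb
    rw [← Complex.cpow_add _ _ hP0]
    exact hnorm _ hb
  have hre : ∀ b : ℂ, -(9/10) < b.re → (-b + -(1-a₁)).re < 0 := by
    intro b hb
    simp only [Complex.add_re, Complex.neg_re, Complex.sub_re, Complex.one_re]
    linarith
  have hu₁ : ‖(p:ℂ)^(-a₁) * (p:ℂ)^(-(1-a₁))‖ < 1 := hu a₁ (hre a₁ (by linarith))
  have hu₂ : ‖(p:ℂ)^(-a₂) * (p:ℂ)^(-(1-a₁))‖ < 1 := hu a₂ (hre a₂ (by linarith))
  have hu₃ : ‖(p:ℂ)^(-a₃) * (p:ℂ)^(-(1-a₁))‖ < 1 := hu a₃ (hre a₃ (by linarith))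
  have h1u : ∀ z : ℂ, ‖z‖ < 1 → 1 - z ≠ 0 := by
    intro z hz h
    rw [sub_eq_zero] at h
    rw [← h] at hz
    simp at hz
  -- differences nonzero
  have hsub : ∀ b c : ℂ, ((1:ℂ) - (p:ℂ)^(b - c) ≠ 0) → (p:ℂ)^(-b) - (p:ℂ)^(-c) ≠ 0 := by
    intro b c h
    have e : (p:ℂ)^(-b) - (p:ℂ)^(-c) = (p:ℂ)^(-b) * (1 - (p:ℂ)^(b-c)) := by
      rw [mul_sub, mul_one, ← Complex.cpow_add _ _ hP0, show -b + (b-c) = -c by ring]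
    rw [e]
    exact mul_ne_zero (hcp _) h
  have h12' := hsub a₁ a₂ (hnv a₁ a₂ (Or.inl rfl) (Or.inr (Or.inl rfl)) h12)
  have h13' := hsub a₁ a₃ (hnv a₁ a₃ (Or.inl rfl) (Or.inr (Or.inr rfl)) h13)
  have h23' := hsub a₂ a₃ (hnv a₂ a₃ (Or.inr (Or.inl rfl)) (Or.inr (Or.inr rfl)) h23)
  have hD : ((p:ℂ)^(-a₁) - (p:ℂ)^(-a₂)) * (((p:ℂ)^(-a₁) - (p:ℂ)^(-a₃)) * ((p:ℂ)^(-a₂) - (p:ℂ)^(-a₃))) ≠ 0 :=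
    mul_ne_zero h12' (mul_ne_zero h13' h23')
  have hprod : (1 - (p:ℂ)^(-a₁) * (p:ℂ)^(-(1-a₁))) * ((1 - (p:ℂ)^(-a₂) * (p:ℂ)^(-(1-a₁))) * (1 - (p:ℂ)^(-a₃) * (p:ℂ)^(-(1-a₁)))) ≠ 0 :=
    mul_ne_zero (h1u _ hu₁) (mul_ne_zero (h1u _ hu₂) (h1u _ hu₃))
  -- cpow algebra helpers
  have hmulinv : ∀ y z : ℂ, (p:ℂ)^y * ((p:ℂ)^z * (p:ℂ))⁻¹ = (p:ℂ)^(y - z - 1) := by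
    intro y z
    rw [Complex.cpow_sub _ _ hP0, Complex.cpow_sub _ _ hP0, Complex.cpow_one, div_div,
      div_eq_mul_inv]
  have htt : (p:ℂ)^(-(1-a₁)) = ((p:ℂ)^(-a₁) * (p:ℂ))⁻¹ := by
    have h := hmulinv 0 (-a₁)
    rw [Complex.cpow_zero, one_mul] at h
    rw [h]
    congr 1
    ring
  have hPs : (p:ℂ)^(1-a₁) = (p:ℂ) * (p:ℂ)^(-a₁) := by
    rw [Complex.cpow_sub _ _ hP0, Complex.cpow_one, Complex.cpow_neg, div_eq_mul_inv]
  -- the value of gX at prime powers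
  have gval : ∀ α : ℕ, gX 3 ![a₁, a₂, a₃] (1 - a₁) (p ^ α)
      = (((p:ℂ)^(-a₂) - (p:ℂ)^(-a₃)) * ((p:ℂ)^(-a₁)) ^ (α+2) *
            ((1 - (p:ℂ)^(-a₂) * (p:ℂ)^(-(1-a₁))) * (1 - (p:ℂ)^(-a₃) * (p:ℂ)^(-(1-a₁))))
          - ((p:ℂ)^(-a₁) - (p:ℂ)^(-a₃)) * ((p:ℂ)^(-a₂)) ^ (α+2) *
            ((1 - (p:ℂ)^(-a₁) * (p:ℂ)^(-(1-a₁))) * (1 - (p:ℂ)^(-a₃) * (p:ℂ)^(-(1-a₁))))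
          + ((p:ℂ)^(-a₁) - (p:ℂ)^(-a₂)) * ((p:ℂ)^(-a₃)) ^ (α+2) *
            ((1 - (p:ℂ)^(-a₁) * (p:ℂ)^(-(1-a₁))) * (1 - (p:ℂ)^(-a₂) * (p:ℂ)^(-(1-a₁)))))
        / (((p:ℂ)^(-a₁) - (p:ℂ)^(-a₂)) * (((p:ℂ)^(-a₁) - (p:ℂ)^(-a₃)) * ((p:ℂ)^(-a₂) - (p:ℂ)^(-a₃)))) := by
    have hM0 : (((p:ℂ)^(-a₂) - (p:ℂ)^(-a₃)) * ((p:ℂ)^(-a₁)) ^ (0+2) *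
            ((1 - (p:ℂ)^(-a₂) * (p:ℂ)^(-(1-a₁))) * (1 - (p:ℂ)^(-a₃) * (p:ℂ)^(-(1-a₁))))
          - ((p:ℂ)^(-a₁) - (p:ℂ)^(-a₃)) * ((p:ℂ)^(-a₂)) ^ (0+2) *
            ((1 - (p:ℂ)^(-a₁) * (p:ℂ)^(-(1-a₁))) * (1 - (p:ℂ)^(-a₃) * (p:ℂ)^(-(1-a₁))))
          + ((p:ℂ)^(-a₁) - (p:ℂ)^(-a₂)) * ((p:ℂ)^(-a₃)) ^ (0+2) *
            ((1 - (p:ℂ)^(-a₁) * (p:ℂ)^(-(1-a₁))) * (1 - (p:ℂ)^(-a₂) * (p:ℂ)^(-(1-a₁)))))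
        = ((p:ℂ)^(-a₁) - (p:ℂ)^(-a₂)) * (((p:ℂ)^(-a₁) - (p:ℂ)^(-a₃)) * ((p:ℂ)^(-a₂) - (p:ℂ)^(-a₃))) := by
      ring
    intro α
    rcases α with _ | β
    · rw [pow_zero, gX_one, hM0]
      exact (div_self hD).symm
    · rw [gX_prime_pow hp 3 ![a₁, a₂, a₃] (1 - a₁) (Nat.succ_ne_zero β)]
      rw [show (∑' m : ℕ, sigmaX 3 ![a₁, a₂, a₃] (p ^ m) * (p:ℂ) ^ (-(m:ℂ) * (1 - a₁)))
          = ∑' m : ℕ, sigmaX 3 ![a₁, a₂, a₃] (p ^ (m + 0)) * (p:ℂ) ^ (-(m:ℂ) * (1 - a₁)) from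
        tsum_congr fun m => by rw [add_zero]]
      rw [N_closed hp a₁ a₂ a₃ (1 - a₁) (β+1) hu₁ hu₂ hu₃ hD,
        N_closed hp a₁ a₂ a₃ (1 - a₁) 0 hu₁ hu₂ hu₃ hD, hM0]
      exact div_quot _ _ _ hprod hD
  -- the key formula
  have key : ∀ n : ℕ, 1 ≤ n → GX 3 ![a₁, a₂, a₃] (1 - a₁) (p ^ n)
      = ((p:ℂ)^(-a₂))^n * ((1 - (p:ℂ)^(-a₃)*((p:ℂ)^(-a₁)*(p:ℂ))⁻¹) / (1 - (p:ℂ)^(-a₃)*((p:ℂ)^(-a₂))⁻¹))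
        + ((p:ℂ)^(-a₃))^n * ((1 - (p:ℂ)^(-a₂)*((p:ℂ)^(-a₁)*(p:ℂ))⁻¹) / (1 - (p:ℂ)^(-a₂)*((p:ℂ)^(-a₃))⁻¹)) := by
    intro n hn
    have pw2 : ∀ z : ℂ, z^(n+2) = z^n * z^2 := fun z => by ring
    have pw1 : ∀ z : ℂ, z^(n+1) = z^n * z := fun z => by ring
    rw [GX_prime_pow hp 3 ![a₁, a₂, a₃] (1 - a₁) hn, gval n, gval (n-1),
      show n - 1 + 2 = n + 1 from by omega, htt, hPs]
    simp only [pw2, pw1]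
    exact final_algebra (p:ℂ) ((p:ℂ)^(-a₁)) ((p:ℂ)^(-a₂)) ((p:ℂ)^(-a₃))
      (((p:ℂ)^(-a₁))^n) (((p:ℂ)^(-a₂))^n) (((p:ℂ)^(-a₃))^n)
      hP0 hP1 (hcp _) (hcp _) (hcp _) h12' h13' h23'
  constructor
  · rw [key j hj]
    have c1 : (p:ℂ)^(-a₂ * (j:ℂ)) = ((p:ℂ)^(-a₂))^j := by
      rw [show (-a₂ * (j:ℂ)) = ((j:ℕ):ℂ) * (-a₂) from by push_cast; ring, Complex.cpow_nat_mul]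
    have c2 : (p:ℂ)^(-a₃ * (j:ℂ)) = ((p:ℂ)^(-a₃))^j := by
      rw [show (-a₃ * (j:ℂ)) = ((j:ℕ):ℂ) * (-a₃) from by push_cast; ring, Complex.cpow_nat_mul]
    have c3 : (p:ℂ)^(-1+a₁-a₃) = (p:ℂ)^(-a₃) * ((p:ℂ)^(-a₁) * (p:ℂ))⁻¹ := by
      rw [hmulinv]
      congr 1
      ring
    have c4 : (p:ℂ)^(-1+a₁-a₂) = (p:ℂ)^(-a₂) * ((p:ℂ)^(-a₁) * (p:ℂ))⁻¹ := by
      rw [hmulinv]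
      congr 1
      ring
    have c5 : (p:ℂ)^(a₂-a₃) = (p:ℂ)^(-a₃) * ((p:ℂ)^(-a₂))⁻¹ := by
      rw [← Complex.cpow_neg, ← Complex.cpow_add _ _ hP0]
      congr 1
      ring
    have c6 : (p:ℂ)^(a₃-a₂) = (p:ℂ)^(-a₂) * ((p:ℂ)^(-a₃))⁻¹ := by
      rw [← Complex.cpow_neg, ← Complex.cpow_add _ _ hP0]
      congr 1
      ring
    rw [c1, c2, c3, c4, c5, c6]
  · conv_lhs => rw [show p = p ^ 1 from (pow_one p).symm]
    rw [key 1 le_rfl, pow_one, pow_one,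
      part2_algebra (p:ℂ) ((p:ℂ)^(-a₁)) ((p:ℂ)^(-a₂)) ((p:ℂ)^(-a₃)) hP0 (hcp _) (hcp _) (hcp _) h23']
    have c7 : (p:ℂ)^(-1+a₁-a₂-a₃) = (p:ℂ)^(-a₂) * ((p:ℂ)^(-a₃) * ((p:ℂ)^(-a₁) * (p:ℂ))⁻¹) := by
      rw [hmulinv, ← Complex.cpow_add _ _ hP0]
      congr 1
      ring
    rw [c7]
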